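/- arXiv:2003.06341 — 2 statements merged into one kernel-verified Lean document; each statement's English description precedes it below -/
import Mathlib

section
/- Consider the SIS model under multi-layer Markovian mobility, with F* = F(v) and L* = L(v). There exists a vector p̄ ∈ ℝ^{nm} with 0 ≪ p̄ ≤ 1 (all entries in (0,1]) satisfying the endemic-equilibrium equation (B F* − D − L* − diag(p̄) B F*) p̄ = 0 if and only if μ(B F* − D − L*) > 0, where μ(G) denotes the largest real part of an eigenvalue of G. -/
open Matrix Finset Filter

namespace SISMobility

/-- Index type for (class, patch) pairs: `(α, i)` with `α ∈ {1,…,m}` a class and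
`i ∈ {1,…,n}` a patch. -/
abbrev Idx (n m : ℕ) := Fin m × Fin n

/-- A CTMC generator matrix: nonnegative off-diagonal entries and zero row sums
(so that the diagonal entry is minus the total outgoing rate). -/
def IsGenerator {n : ℕ} (Q : Matrix (Fin n) (Fin n) ℝ) : Prop :=
  (∀ i j, i ≠ j → 0 ≤ Q i j) ∧ ∀ i, ∑ j, Q i j = 0

/-- Strong connectivity of the digraph on `{1,…,n}` with an edge `(i,j)` whenever
`i ≠ j` and `Q i j > 0`. -/
def StronglyConnected {n : ℕ} (Q : Matrix (Fin n) (Fin n) ℝ) : Prop :=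
  ∀ i j : Fin n, Relation.ReflTransGen (fun a b => a ≠ b ∧ 0 < Q a b) i j

/-- The `nm × nm` block-diagonal infection-rate matrix `B` (m copies of `diag β`). -/
noncomputable def Bmat (n m : ℕ) (β : Fin n → ℝ) : Matrix (Idx n m) (Idx n m) ℝ :=
  Matrix.diagonal fun k => β k.2

/-- The `nm × nm` block-diagonal recovery-rate matrix `D` (m copies of `diag δ`). -/
noncomputable def Dmat (n m : ℕ) (δ : Fin n → ℝ) : Matrix (Idx n m) (Idx n m) ℝ :=
  Matrix.diagonal fun k => δ k.2

/-- The block-diagonal mobility matrix `L(x)`: the `α`-block has entries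
`l^α_{ii} = ∑_{j≠i} q^α_{ji} x^α_j / x^α_i` and `l^α_{ij} = -q^α_{ji} x^α_j / x^α_i`. -/
noncomputable def Lmat {n m : ℕ} (Q : Fin m → Matrix (Fin n) (Fin n) ℝ)
    (x : Idx n m → ℝ) : Matrix (Idx n m) (Idx n m) ℝ :=
  fun k l =>
    if k.1 = l.1 then
      if k.2 = l.2 then ∑ j ∈ Finset.univ.filter (· ≠ k.2), Q k.1 j k.2 * x (k.1, j) / x k
      else -(Q k.1 l.2 k.2 * x (k.1, l.2) / x k)
    else 0

/-- The population-fraction matrix `F(x)`: entry `((α,i),(γ,j))` equals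
`x^γ_i / ∑_η x^η_i` if `j = i` and `0` otherwise. -/
noncomputable def Fmat {n m : ℕ} (x : Idx n m → ℝ) : Matrix (Idx n m) (Idx n m) ℝ :=
  fun k l => if l.2 = k.2 then x (l.1, k.2) / ∑ η : Fin m, x (η, k.2) else 0

/-- Right-hand side of the infection dynamics
`ṗ = (B F(x) − D − L(x)) p − diag(p) B F(x) p`. -/
noncomputable def pRHS {n m : ℕ} (β δ : Fin n → ℝ) (Q : Fin m → Matrix (Fin n) (Fin n) ℝ)
    (x p : Idx n m → ℝ) : Idx n m → ℝ :=
  (Bmat n m β * Fmat x - Dmat n m δ - Lmat Q x).mulVec p -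
    (Matrix.diagonal p * (Bmat n m β * Fmat x)).mulVec p

/-- Right-hand side of the mobility dynamics `ẋ^α = (Q^α)ᵀ x^α`. -/
noncomputable def xRHS {n m : ℕ} (Q : Fin m → Matrix (Fin n) (Fin n) ℝ)
    (x : Idx n m → ℝ) : Idx n m → ℝ :=
  fun k => ∑ j, Q k.1 j k.2 * x (k.1, j)

/-- `(p, x)` is a solution of the SIS model under multi-layer Markovian mobility. -/
def IsSolution {n m : ℕ} (β δ : Fin n → ℝ) (Q : Fin m → Matrix (Fin n) (Fin n) ℝ)
    (p x : ℝ → Idx n m → ℝ) : Prop :=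
  ∀ t : ℝ, 0 ≤ t → ∀ k : Idx n m,
    HasDerivAt (fun s => p s k) (pRHS β δ Q (x t) (p t) k) t ∧
    HasDerivAt (fun s => x s k) (xRHS Q (x t) k) t

/-- The radial abscissa `μ(G)`: the largest real part of a (complex) eigenvalue of a
real matrix `G`. -/
noncomputable def muMax {ι : Type*} [Fintype ι] [DecidableEq ι] (G : Matrix ι ι ℝ) : ℝ :=
  sSup (Complex.re '' spectrum ℂ (G.map (algebraMap ℝ ℂ)))

/-- The spectral radius `ρ(G)` of a real matrix `G`. -/
noncomputable def specRad {ι : Type*} [Fintype ι] [DecidableEq ι] (G : Matrix ι ι ℝ) : ℝ :=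
  sSup ((fun z : ℂ => ‖z‖) '' spectrum ℂ (G.map (algebraMap ℝ ℂ)))

/-- The fixed-point map `H(p) = (I + A(diag p + (I − diag p) M))⁻¹ A p`. -/
noncomputable def Hfun {n m : ℕ} (A M : Matrix (Idx n m) (Idx n m) ℝ)
    (p : Idx n m → ℝ) : Idx n m → ℝ :=
  ((1 + A * (Matrix.diagonal p + (1 - Matrix.diagonal p) * M))⁻¹).mulVec (A.mulVec p)

end SISMobility

open SISMobility

/-!
Write `G = W - R` with `W = B F* ≥ 0` (positive diagonal) and `R = D + L*` a Z-matrix with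
nonnegative row sums, so that `G` is an irreducible Metzler matrix. For `A = G + c I ≥ 0`,
maximising the Collatz–Wielandt quotient over the simplex and smoothing the maximiser with the
positive matrix `(1 + A) ^ K` gives a Perron vector `w ≫ 0` of `G` whose eigenvalue bounds
every `t` with `t y ≤ G y` for some `y ≥ 0`, `y ≠ 0`, as well as the real parts of all
eigenvalues of `G`; hence that eigenvalue is `μ(G)`.

If `p̄ ≫ 0` is an equilibrium, then `G p̄ = p̄ ∘ W p̄ ≫ 0`, hence `μ(G) > 0`. Conversely, for
`s` above the row sums of `W`, the equilibria are the solutions of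
`(s I + R) p = (1 - p) ∘ W p + s p`. The matrix `s I + R` is inverse-positive and the right-hand
side is monotone on `[0, 1]`; when `μ(G) > 0`, `ε w` (for small `ε > 0`) is a subsolution and
`1` a supersolution, and Knaster–Tarski on the order interval `[ε w, 1]` gives an equilibrium.
-/

open Topology

theorem exists_fixedPoint_of_monotoneOn_Icc {α : Type*} [ConditionallyCompleteLattice α]
    {a b : α} (hab : a ≤ b) {T : α → α} (hT : MonotoneOn T (Set.Icc a b)) (ha : a ≤ T a)
    (hb : T b ≤ b) : ∃ p ∈ Set.Icc a b, T p = p := by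
  have : Fact (a ≤ b) := ⟨hab⟩
  have hmaps (p : Set.Icc a b) : T p ∈ Set.Icc a b :=
    ⟨ha.trans (hT ⟨le_rfl, hab⟩ p.2 p.2.1), (hT p.2 ⟨hab, le_rfl⟩ p.2.2).trans hb⟩
  let f : Set.Icc a b →o Set.Icc a b :=
    ⟨fun p => ⟨T p, hmaps p⟩, fun p q hpq => hT p.2 q.2 hpq⟩
  exact ⟨f.lfp, f.lfp.2, congrArg Subtype.val f.map_lfp⟩

namespace Matrix

variable {ι : Type*}

theorem eventually_smul_le [Finite ι] (x : ι → ℝ) {y : ι → ℝ} (hy : ∀ k, 0 < y k) :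
    ∀ᶠ ε in 𝓝 (0 : ℝ), ε • x ≤ y :=
  Filter.eventually_all.2 fun k =>
    ((continuous_id.mul continuous_const).continuousAt.eventually_lt continuousAt_const
      (by simpa using hy k)).mono fun _ h => h.le

theorem exists_pos_smul_le [Finite ι] {x y : ι → ℝ} (hy : ∀ k, 0 < y k) :
    ∃ ε : ℝ, 0 < ε ∧ ε • x ≤ y := by
  obtain ⟨ε, hεx, hε⟩ :=
    (((eventually_smul_le x hy).filter_mono nhdsWithin_le_nhds).and
      (self_mem_nhdsWithin (s := Set.Ioi 0))).exists
  exact ⟨ε, hε, hεx⟩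

section Nonneg

variable {A : Matrix ι ι ℝ}

theorem mulVec_nonneg_of_nonneg [Fintype ι] (hA : ∀ i j, 0 ≤ A i j) {x : ι → ℝ}
    (hx : 0 ≤ x) : 0 ≤ A *ᵥ x :=
  fun i => Finset.sum_nonneg fun j _ => mul_nonneg (hA i j) (hx j)

theorem mulVec_mono_of_nonneg [Fintype ι] (hA : ∀ i j, 0 ≤ A i j) {x y : ι → ℝ}
    (hxy : x ≤ y) : A *ᵥ x ≤ A *ᵥ y := by
  simpa [mulVec_sub] using mulVec_nonneg_of_nonneg hA (sub_nonneg.2 hxy)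

theorem mulVec_pos_of_pos [Fintype ι] (hA : ∀ i j, 0 < A i j) {x : ι → ℝ} (hx : 0 ≤ x)
    (hx0 : x ≠ 0) (i : ι) : 0 < (A *ᵥ x) i := by
  obtain ⟨j, hj⟩ := Function.ne_iff.mp hx0
  exact Finset.sum_pos' (fun k _ => mul_nonneg (hA i k).le (hx k))
    ⟨j, Finset.mem_univ j, mul_pos (hA i j) ((hx j).lt_of_ne' hj)⟩

theorem mulVec_pos_of_diag_pos [Fintype ι] (hA : ∀ i j, 0 ≤ A i j) (hAdiag : ∀ i, 0 < A i i)
    {x : ι → ℝ} (hx : ∀ k, 0 < x k) (i : ι) : 0 < (A *ᵥ x) i :=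
  Finset.sum_pos' (fun j _ => mul_nonneg (hA i j) (hx j).le)
    ⟨i, Finset.mem_univ i, mul_pos (hAdiag i) (hx i)⟩

theorem monotoneOn_one_sub_mul_mulVec_add_smul [Fintype ι] (hA : ∀ i j, 0 ≤ A i j) {s : ℝ}
    (hs : ∀ i, ∑ j, A i j ≤ s) :
    MonotoneOn (fun p => (1 - p) * A *ᵥ p + s • p) (Set.Icc 0 1) := by
  rintro p ⟨-, hp1⟩ q ⟨-, hq1⟩ hpq k
  have hApq := mulVec_mono_of_nonneg hA hpq k
  have hAps : (A *ᵥ p) k ≤ s :=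
    (mulVec_mono_of_nonneg hA hp1 k).trans (by simpa [mulVec, dotProduct] using hs k)
  have := mul_nonneg (sub_nonneg.2 (show q k ≤ 1 from hq1 k)) (sub_nonneg.2 hApq)
  have := mul_nonneg (sub_nonneg.2 (hpq k)) (sub_nonneg.2 hAps)
  simp only [Pi.add_apply, Pi.mul_apply, Pi.sub_apply, Pi.one_apply, Pi.smul_apply, smul_eq_mul]
  nlinarith

variable [Fintype ι] [DecidableEq ι]

omit [Fintype ι] in
theorem one_add_apply_nonneg (hA : ∀ i j, 0 ≤ A i j) (i j : ι) : 0 ≤ (1 + A) i j := by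
  rw [add_apply, one_apply]
  split_ifs <;> linarith [hA i j]

theorem exists_one_add_pow_pos (hA : ∀ i j, 0 ≤ A i j)
    (hirr : ∀ i j, Relation.ReflTransGen (fun a b => 0 < A a b) i j) :
    ∃ K : ℕ, ∀ i j, 0 < ((1 + A) ^ K) i j := by
  have hpow_nonneg := pow_apply_nonneg (one_add_apply_nonneg hA)
  have hpath (i j : ι) : ∃ k : ℕ, 0 < ((1 + A) ^ k) i j := by
    induction hirr i j with
    | refl => exact ⟨0, by simp⟩
    | @tail b c _ hbc ih =>
      obtain ⟨k, hk⟩ := ih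
      refine ⟨k + 1, ?_⟩
      rw [pow_succ, mul_add, mul_one, add_apply]
      refine add_pos_of_nonneg_of_pos (hpow_nonneg k i c) ((mul_pos hk hbc).trans_le ?_)
      exact Finset.single_le_sum (f := fun l => ((1 + A) ^ k) i l * A l c)
        (fun l _ => mul_nonneg (hpow_nonneg k i l) (hA l c)) (Finset.mem_univ b)
  choose k hk using hpath
  -- entrywise `(1 + A) ^ k ≤ (1 + A) ^ k + (1 + A) ^ k * A = (1 + A) ^ (k + 1)`
  have hmono (i j : ι) : Monotone fun k : ℕ => ((1 + A) ^ k) i j :=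
    monotone_nat_of_le_succ fun k => by
      rw [pow_succ, mul_add, mul_one, add_apply, le_add_iff_nonneg_right]
      exact Finset.sum_nonneg fun l _ => mul_nonneg (hpow_nonneg k i l) (hA l j)
  refine ⟨Finset.univ.sup fun p : ι × ι => k p.1 p.2, fun i j => (hk i j).trans_le ?_⟩
  exact hmono i j (Finset.le_sup (f := fun p : ι × ι => k p.1 p.2) (Finset.mem_univ (i, j)))

theorem exists_collatzWielandt_max [Nonempty ι] (hA : ∀ i j, 0 ≤ A i j) :
    ∃ r : ℝ, ∃ x ∈ stdSimplex ℝ ι, r • x ≤ A *ᵥ x ∧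
      ∀ (t : ℝ) (y : ι → ℝ), 0 ≤ y → y ≠ 0 → t • y ≤ A *ᵥ y → t ≤ r := by
  set C := ∑ i, ∑ j, A i j
  have hbound (t : ℝ) (y : ι → ℝ) (hy : y ∈ stdSimplex ℝ ι) (hty : t • y ≤ A *ᵥ y) :
      t ≤ C :=
    calc t = ∑ k, t * y k := by rw [← Finset.mul_sum, hy.2, mul_one]
      _ ≤ ∑ k, (A *ᵥ y) k := Finset.sum_le_sum fun k _ => hty k
      _ ≤ C := Finset.sum_le_sum fun i _ => Finset.sum_le_sum fun j _ =>
          mul_le_of_le_one_right (hA i j) (mem_Icc_of_mem_stdSimplex hy j).2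
  set K := (Set.Icc 0 C ×ˢ stdSimplex ℝ ι) ∩ {q | q.1 • q.2 ≤ A *ᵥ q.2}
  have hK : IsCompact K := (isCompact_Icc.prod (isCompact_stdSimplex ℝ ι)).inter_right
    (isClosed_le (by fun_prop) (by fun_prop))
  have hKne : K.Nonempty := by
    obtain ⟨i⟩ := ‹Nonempty ι›
    refine ⟨(0, Pi.single i 1), ⟨⟨le_rfl, ?_⟩, single_mem_stdSimplex ℝ i⟩, ?_⟩
    · exact Finset.sum_nonneg fun i _ => Finset.sum_nonneg fun j _ => hA i j
    · rw [Set.mem_ofPred_eq, zero_smul]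
      exact mulVec_nonneg_of_nonneg hA (single_mem_stdSimplex ℝ i).1
  obtain ⟨⟨r, x⟩, ⟨⟨hr, hx⟩, hrx⟩, hmax⟩ := hK.exists_isMaxOn hKne continuous_fst.continuousOn
  refine ⟨r, x, hx, hrx, fun t y hy hy0 hty => ?_⟩
  rcases le_or_gt t 0 with ht | ht
  · exact ht.trans hr.1
  have hσ : 0 < ∑ k, y k := by
    obtain ⟨j, hj⟩ := Function.ne_iff.mp hy0
    exact Finset.sum_pos' (fun k _ => hy k) ⟨j, Finset.mem_univ j, (hy j).lt_of_ne' hj⟩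
  have hσy : (∑ k, y k)⁻¹ • y ∈ stdSimplex ℝ ι :=
    ⟨fun k => mul_nonneg (inv_nonneg.2 hσ.le) (hy k), by
      simp [← Finset.mul_sum, inv_mul_cancel₀ hσ.ne']⟩
  have htσy : t • (∑ k, y k)⁻¹ • y ≤ A *ᵥ (∑ k, y k)⁻¹ • y := by
    rw [mulVec_smul, smul_comm]
    exact smul_le_smul_of_nonneg_left hty (inv_nonneg.2 hσ.le)
  exact hmax (a := (t, _)) ⟨⟨⟨ht.le, hbound _ _ hσy htσy⟩, hσy⟩, htσy⟩

theorem exists_perron_eigenvector [Nonempty ι] (hA : ∀ i j, 0 ≤ A i j)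
    (hirr : ∀ i j, Relation.ReflTransGen (fun a b => 0 < A a b) i j) :
    ∃ (r : ℝ) (w : ι → ℝ), (∀ k, 0 < w k) ∧ A *ᵥ w = r • w ∧
      ∀ (t : ℝ) (y : ι → ℝ), 0 ≤ y → y ≠ 0 → t • y ≤ A *ᵥ y → t ≤ r := by
  obtain ⟨r, x, hx, hrx, hCW⟩ := exists_collatzWielandt_max hA
  obtain ⟨K, hK⟩ := exists_one_add_pow_pos hA hirr
  have hxne : x ≠ 0 := fun h => by simpa [h] using hx.2
  have hPx_pos := mulVec_pos_of_pos hK hx.1 hxne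
  -- if `A x ≠ r x`, then `P = (1 + A) ^ K` turns the slack `A x - r x` into a strictly
  -- positive one at `P x`, contradicting the maximality of `r`
  have heig : A *ᵥ x = r • x := by
    by_contra hne
    have hz := mulVec_pos_of_pos hK (sub_nonneg.2 hrx) (sub_ne_zero.2 hne)
    obtain ⟨ε, hε, hεz⟩ := exists_pos_smul_le (x := (1 + A) ^ K *ᵥ x) hz
    have hAP : A *ᵥ ((1 + A) ^ K *ᵥ x) = r • ((1 + A) ^ K *ᵥ x) +
        (1 + A) ^ K *ᵥ (A *ᵥ x - r • x) := by
      rw [mulVec_mulVec, (((Commute.one_right A).add_right (Commute.refl A)).pow_right K).eq,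
        ← mulVec_mulVec, mulVec_sub, mulVec_smul, add_sub_cancel]
    have := hCW (r + ε) _ (fun k => (hPx_pos k).le) (fun h => by simp [h] at hPx_pos)
      (by rw [hAP, add_smul]; exact add_le_add_right hεz _)
    linarith
  have hr : 0 ≤ r := hCW 0 x hx.1 hxne
    (by rw [zero_smul]; exact mulVec_nonneg_of_nonneg hA hx.1)
  have hPx (k : ℕ) : (1 + A) ^ k *ᵥ x = (1 + r) ^ k • x := by
    induction k with
    | zero => simp
    | succ k ih =>
      rw [pow_succ', ← mulVec_mulVec, ih, mulVec_smul, add_mulVec, one_mulVec, heig]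
      module
  refine ⟨r, x, fun k => ?_, heig, hCW⟩
  have := hPx_pos k
  rw [hPx, Pi.smul_apply, smul_eq_mul] at this
  exact pos_of_mul_pos_right this (by positivity)

omit [DecidableEq ι] in
theorem norm_le_of_mulVec_eq_smul {r : ℝ} (hA : ∀ i j, 0 ≤ A i j)
    (hCW : ∀ (t : ℝ) (y : ι → ℝ), 0 ≤ y → y ≠ 0 → t • y ≤ A *ᵥ y → t ≤ r)
    {t : ℂ} {z : ι → ℂ} (hz0 : z ≠ 0) (hz : A.map (algebraMap ℝ ℂ) *ᵥ z = t • z) :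
    ‖t‖ ≤ r := by
  refine hCW ‖t‖ (fun k => ‖z k‖) (fun k => norm_nonneg _) (fun h => hz0 ?_) fun k => ?_
  · funext k
    simpa using congrFun h k
  calc ‖t‖ * ‖z k‖ = ‖(A.map (algebraMap ℝ ℂ) *ᵥ z) k‖ := by
        rw [hz, Pi.smul_apply, smul_eq_mul, norm_mul]
    _ ≤ ∑ j, ‖(A k j : ℂ) * z j‖ := norm_sum_le _ _
    _ = (A *ᵥ fun k => ‖z k‖) k := by
      simp [mulVec, dotProduct, abs_of_nonneg (hA k _)]

end Nonneg

section ZMatrix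

variable [Fintype ι] {S : Matrix ι ι ℝ}

-- at a most negative entry `x i < 0` one would get `(S x) i ≤ (∑ j, S i j) * x i < 0`
theorem nonneg_of_nonneg_mulVec_of_rowSum_pos (hoff : ∀ i j, i ≠ j → S i j ≤ 0)
    (hrow : ∀ i, 0 < ∑ j, S i j) {x : ι → ℝ} (hx : 0 ≤ S *ᵥ x) : 0 ≤ x := by
  by_contra hneg
  obtain ⟨k, hk⟩ : ∃ k, x k < 0 := by simpa [Pi.le_def] using hneg
  obtain ⟨i, -, hi⟩ := Finset.exists_min_image Finset.univ x ⟨k, Finset.mem_univ k⟩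
  have hSx : (S *ᵥ x) i ≤ (∑ j, S i j) * x i := by
    rw [Finset.sum_mul]
    refine Finset.sum_le_sum fun j _ => ?_
    rcases eq_or_ne i j with rfl | hij
    · exact le_rfl
    · exact mul_le_mul_of_nonpos_left (hi j (Finset.mem_univ j)) (hoff i j hij)
  linarith [show (0 : ℝ) ≤ (S *ᵥ x) i from hx i,
    mul_neg_of_pos_of_neg (hrow i) ((hi k (Finset.mem_univ k)).trans_lt hk)]

variable [DecidableEq ι]

theorem isUnit_det_of_rowSum_pos (hoff : ∀ i j, i ≠ j → S i j ≤ 0)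
    (hrow : ∀ i, 0 < ∑ j, S i j) : IsUnit S.det := by
  rw [isUnit_iff_ne_zero]
  intro hdet
  obtain ⟨y, hy0, hy⟩ := exists_mulVec_eq_zero_iff.mpr hdet
  have h1 := nonneg_of_nonneg_mulVec_of_rowSum_pos hoff hrow (x := y) hy.ge
  have h2 := nonneg_of_nonneg_mulVec_of_rowSum_pos hoff hrow (x := -y)
    (by rw [mulVec_neg, hy, neg_zero])
  exact hy0 (le_antisymm (by simpa using h2) h1)

theorem exists_mulVec_eq_of_mulVec_le_of_le_mulVec (hoff : ∀ i j, i ≠ j → S i j ≤ 0)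
    (hrow : ∀ i, 0 < ∑ j, S i j) {b : (ι → ℝ) → ι → ℝ} {e f : ι → ℝ} (hef : e ≤ f)
    (hb : MonotoneOn b (Set.Icc e f)) (he : S *ᵥ e ≤ b e) (hf : b f ≤ S *ᵥ f) :
    ∃ p ∈ Set.Icc e f, S *ᵥ p = b p := by
  have hdet := isUnit_det_of_rowSum_pos hoff hrow
  have hinv_mono {x y : ι → ℝ} (hxy : x ≤ y) : S⁻¹ *ᵥ x ≤ S⁻¹ *ᵥ y := by
    refine sub_nonneg.1 (nonneg_of_nonneg_mulVec_of_rowSum_pos hoff hrow ?_)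
    rwa [mulVec_sub, mulVec_mulVec, mulVec_mulVec, mul_nonsing_inv _ hdet, one_mulVec,
      one_mulVec, sub_nonneg]
  have hinv_mul (x : ι → ℝ) : S⁻¹ *ᵥ (S *ᵥ x) = x := by
    rw [mulVec_mulVec, nonsing_inv_mul _ hdet, one_mulVec]
  obtain ⟨p, hp, hTp⟩ := exists_fixedPoint_of_monotoneOn_Icc (T := fun p => S⁻¹ *ᵥ b p) hef
    (fun p hp q hq hpq => hinv_mono (hb hp hq hpq))
    ((hinv_mul e).symm.trans_le (hinv_mono he)) ((hinv_mono hf).trans_eq (hinv_mul f))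
  refine ⟨p, hp, ?_⟩
  conv_lhs => rw [← hTp]
  rw [mulVec_mulVec, mul_nonsing_inv _ hdet, one_mulVec]

end ZMatrix

theorem mem_spectrum_iff_exists_mulVec_eq_smul [Fintype ι] [DecidableEq ι] {K : Type*}
    [Field K] {M : Matrix ι ι K} {t : K} : t ∈ spectrum K M ↔ ∃ z ≠ 0, M *ᵥ z = t • z := by
  rw [← spectrum_toLin', ← Module.End.hasEigenvalue_iff_mem_spectrum]
  constructor
  · intro h
    obtain ⟨z, hz⟩ := h.exists_hasEigenvector
    exact ⟨z, hz.2, by simpa using hz.apply_eq_smul⟩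
  · rintro ⟨z, hz0, hz⟩
    exact Module.End.hasEigenvalue_of_hasEigenvector
      ⟨by simpa [Module.End.mem_eigenspace_iff] using hz, hz0⟩

end Matrix

namespace SISMobility

section Perron

variable {ι : Type*} [Fintype ι] [DecidableEq ι] {G : Matrix ι ι ℝ}

theorem muMax_eq_of_collatzWielandt {c r : ℝ} (hA : ∀ i j, 0 ≤ (G + c • 1) i j)
    (hCW : ∀ (t : ℝ) (y : ι → ℝ), 0 ≤ y → y ≠ 0 → t • y ≤ (G + c • 1) *ᵥ y → t ≤ r)
    {w : ι → ℝ} (hw : w ≠ 0) (hGw : G *ᵥ w = (r - c) • w) : muMax G = r - c := by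
  refine IsGreatest.csSup_eq ⟨⟨((r - c : ℝ) : ℂ), mem_spectrum_iff_exists_mulVec_eq_smul.2
    ⟨algebraMap ℝ ℂ ∘ w, fun h => hw (funext fun k => by simpa using congrFun h k),
      funext fun k => ?_⟩, Complex.ofReal_re _⟩, ?_⟩
  · rw [← RingHom.map_mulVec, hGw]
    simp
  rintro _ ⟨t, ht, rfl⟩
  obtain ⟨z, hz0, hz⟩ := mem_spectrum_iff_exists_mulVec_eq_smul.1 ht
  have hAz : (G + c • 1).map (algebraMap ℝ ℂ) *ᵥ z = (t + c) • z := by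
    have hAc : (G + c • 1).map (algebraMap ℝ ℂ) = G.map (algebraMap ℝ ℂ) + (c : ℂ) • 1 := by
      ext i j
      rcases eq_or_ne i j with rfl | hij <;> simp [*]
    rw [hAc, add_mulVec, smul_mulVec, one_mulVec, hz, add_smul]
  have := (Complex.re_le_norm _).trans (norm_le_of_mulVec_eq_smul hA hCW hz0 hAz)
  simp only [Complex.add_re, Complex.ofReal_re] at this
  linarith

theorem exists_perron_eigenvector_muMax [Nonempty ι] (hG : ∀ i j, i ≠ j → 0 ≤ G i j)
    (hirr : ∀ i j, Relation.ReflTransGen (fun a b => a ≠ b ∧ 0 < G a b) i j) :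
    ∃ w : ι → ℝ, (∀ k, 0 < w k) ∧ G *ᵥ w = muMax G • w ∧
      ∀ (t : ℝ) (y : ι → ℝ), 0 ≤ y → y ≠ 0 → t • y ≤ G *ᵥ y → t ≤ muMax G := by
  set c := ∑ k, |G k k|
  have hAmulVec (y : ι → ℝ) : (G + c • 1) *ᵥ y = G *ᵥ y + c • y := by
    rw [add_mulVec, smul_mulVec, one_mulVec]
  have hA (i j : ι) : 0 ≤ (G + c • 1) i j := by
    rcases eq_or_ne i j with rfl | hij
    · have := Finset.single_le_sum (fun k _ => abs_nonneg (G k k)) (Finset.mem_univ i)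
      simp only [Matrix.add_apply, Matrix.smul_apply, one_apply_eq, smul_eq_mul, mul_one]
      linarith [neg_abs_le (G i i)]
    · simpa [one_apply_ne hij] using hG i j hij
  have hAirr (i j : ι) : Relation.ReflTransGen (fun a b => 0 < (G + c • 1) a b) i j :=
    Relation.ReflTransGen.mono (fun a b ⟨hab, h⟩ => by simpa [one_apply_ne hab] using h)
      i j (hirr i j)
  obtain ⟨r, w, hw, hAw, hCW⟩ := exists_perron_eigenvector hA hAirr
  have hGw : G *ᵥ w = (r - c) • w := by
    rw [sub_smul, ← hAw, hAmulVec, add_sub_cancel_right]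
  rw [muMax_eq_of_collatzWielandt hA hCW
    (fun h => (hw (Classical.arbitrary ι)).ne' (congrFun h _)) hGw]
  refine ⟨w, hw, hGw, fun t y hy hy0 hty => ?_⟩
  have := hCW (t + c) y hy hy0 (by rw [hAmulVec, add_smul]; exact add_le_add_left hty _)
  linarith

end Perron

section Equilibrium

variable {ι : Type*} [Fintype ι] [DecidableEq ι] {W R : Matrix ι ι ℝ}

theorem one_sub_mul_mulVec_add_smul_sub_mulVec (s : ℝ) (p : ι → ℝ) :
    (1 - p) * W *ᵥ p + s • p - (s • 1 + R) *ᵥ p = (W - R - diagonal p * W) *ᵥ p := by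
  ext k
  simp only [Pi.add_apply, Pi.sub_apply, Pi.mul_apply, Pi.one_apply, Pi.smul_apply, smul_eq_mul,
    add_mulVec, sub_mulVec, smul_mulVec, one_mulVec, ← mulVec_mulVec, mulVec_diagonal]
  ring

theorem sub_diagonal_mul_mulVec_smul_apply {μ : ℝ} {w : ι → ℝ} (hGw : (W - R) *ᵥ w = μ • w)
    (ε : ℝ) (k : ι) :
    ((W - R - diagonal (ε • w) * W) *ᵥ (ε • w)) k = ε * w k * (μ - ε * (W *ᵥ w) k) := by
  have := congrFun hGw k
  simp only [sub_mulVec, ← mulVec_mulVec, mulVec_diagonal, mulVec_smul, Pi.sub_apply,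
    Pi.smul_apply, smul_eq_mul] at this ⊢
  linear_combination ε * this

theorem pos_of_endemic [Nonempty ι] (hW : ∀ i j, 0 ≤ W i j) (hWdiag : ∀ i, 0 < W i i)
    {μ : ℝ} (hCW : ∀ (t : ℝ) (y : ι → ℝ), 0 ≤ y → y ≠ 0 → t • y ≤ (W - R) *ᵥ y → t ≤ μ)
    {p : ι → ℝ} (hp : ∀ k, 0 < p k) (hpeq : (W - R - diagonal p * W) *ᵥ p = 0) : 0 < μ := by
  have hGp (k : ι) : 0 < ((W - R) *ᵥ p) k := by
    have := congrFun hpeq k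
    simp only [sub_mulVec, ← mulVec_mulVec, mulVec_diagonal, Pi.sub_apply, Pi.zero_apply,
      sub_eq_zero] at this
    rw [sub_mulVec, Pi.sub_apply, this]
    exact mul_pos (hp k) (mulVec_pos_of_diag_pos hW hWdiag hp k)
  obtain ⟨ε, hε, hεp⟩ := exists_pos_smul_le (x := p) hGp
  exact hε.trans_le <| hCW ε p (fun k => (hp k).le)
    (fun h => (hp (Classical.arbitrary ι)).ne' (congrFun h _)) hεp

theorem exists_endemic_of_eigenvector_pos (hW : ∀ i j, 0 ≤ W i j)
    (hRoff : ∀ i j, i ≠ j → R i j ≤ 0) (hRrow : ∀ i, 0 ≤ ∑ j, R i j) {μ : ℝ} (hμ : 0 < μ)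
    {w : ι → ℝ} (hw : ∀ k, 0 < w k) (hGw : (W - R) *ᵥ w = μ • w) :
    ∃ p : ι → ℝ, (∀ k, 0 < p k ∧ p k ≤ 1) ∧ (W - R - diagonal p * W) *ᵥ p = 0 := by
  obtain ⟨M, hM⟩ := Finite.exists_le fun i => ∑ j, W i j
  obtain ⟨s, hs, hWs⟩ : ∃ s : ℝ, 0 < s ∧ ∀ i, ∑ j, W i j ≤ s :=
    ⟨max M 1, by positivity, fun i => (hM i).trans (le_max_left M 1)⟩
  have hSoff (i j : ι) (hij : i ≠ j) : (s • 1 + R) i j ≤ 0 := by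
    simpa [one_apply_ne hij] using hRoff i j hij
  have hSrow (i : ι) : 0 < ∑ j, (s • 1 + R) i j := by
    simp only [Matrix.add_apply, Matrix.smul_apply, Finset.sum_add_distrib, one_apply,
      smul_eq_mul, mul_ite, mul_one, mul_zero, Finset.sum_ite_eq, Finset.mem_univ, if_true]
    linarith [hRrow i]
  obtain ⟨ε, ⟨hεw, hεWw⟩, hε⟩ :=
    (((eventually_smul_le w (y := 1) fun _ => one_pos).and
      (eventually_smul_le (W *ᵥ w) (y := fun _ => μ) fun _ => hμ)).filter_mono
        nhdsWithin_le_nhds).and (self_mem_nhdsWithin (s := Set.Ioi 0)) |>.exists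
  -- the equilibrium field is `ε w ∘ (μ - ε W w) ≥ 0` at `ε w` and `-R 1 ≤ 0` at `1`
  have hsub : (s • 1 + R) *ᵥ (ε • w) ≤ (1 - ε • w) * W *ᵥ (ε • w) + s • ε • w := by
    rw [← sub_nonneg, one_sub_mul_mulVec_add_smul_sub_mulVec]
    intro k
    rw [sub_diagonal_mul_mulVec_smul_apply hGw]
    exact mul_nonneg (mul_pos hε (hw k)).le (sub_nonneg.2 (hεWw k))
  have hsuper : (1 - 1) * W *ᵥ 1 + s • 1 ≤ (s • 1 + R) *ᵥ 1 := by
    rw [← sub_nonpos, one_sub_mul_mulVec_add_smul_sub_mulVec]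
    intro k
    simpa [sub_mulVec, mulVec, dotProduct] using hRrow k
  obtain ⟨p, ⟨hep, hp1⟩, hp⟩ := exists_mulVec_eq_of_mulVec_le_of_le_mulVec hSoff hSrow hεw
    ((monotoneOn_one_sub_mul_mulVec_add_smul hW hWs).mono
      (Set.Icc_subset_Icc_left fun k => (mul_pos hε (hw k)).le)) hsub hsuper
  refine ⟨p, fun k => ⟨(mul_pos hε (hw k)).trans_le (hep k), hp1 k⟩, ?_⟩
  rw [← one_sub_mul_mulVec_add_smul_sub_mulVec s, hp, sub_self]

theorem exists_endemic_iff_muMax_pos [Nonempty ι] (hW : ∀ i j, 0 ≤ W i j)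
    (hWdiag : ∀ i, 0 < W i i) (hRoff : ∀ i j, i ≠ j → R i j ≤ 0) (hRrow : ∀ i, 0 ≤ ∑ j, R i j)
    (hirr : ∀ i j, Relation.ReflTransGen (fun a b => a ≠ b ∧ 0 < (W - R) a b) i j) :
    (∃ p : ι → ℝ, (∀ k, 0 < p k ∧ p k ≤ 1) ∧ (W - R - diagonal p * W) *ᵥ p = 0) ↔
      0 < muMax (W - R) := by
  obtain ⟨w, hw, hGw, hCW⟩ := exists_perron_eigenvector_muMax
    (fun i j hij => by rw [Matrix.sub_apply]; linarith [hW i j, hRoff i j hij]) hirr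
  exact ⟨fun ⟨p, hp, hpeq⟩ => pos_of_endemic hW hWdiag hCW (fun k => (hp k).1) hpeq,
    fun hμ => exists_endemic_of_eigenvector_pos hW hRoff hRrow hμ hw hGw⟩

end Equilibrium

section Model

variable {n m : ℕ}

theorem Bmat_mul_Fmat_apply (β : Fin n → ℝ) (x : Idx n m → ℝ) (k l : Idx n m) :
    (Bmat n m β * Fmat x) k l =
      if l.2 = k.2 then β k.2 * (x (l.1, k.2) / ∑ η, x (η, k.2)) else 0 := by
  simp [Bmat, Fmat, diagonal_mul, mul_ite]

theorem Lmat_apply_of_ne (Q : Fin m → Matrix (Fin n) (Fin n) ℝ) (x : Idx n m → ℝ)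
    {k l : Idx n m} (hkl : k ≠ l) :
    Lmat Q x k l = if k.1 = l.1 then -(Q k.1 l.2 k.2 * x (k.1, l.2) / x k) else 0 := by
  by_cases h1 : k.1 = l.1
  · have h2 : k.2 ≠ l.2 := fun h2 => hkl (Prod.ext h1 h2)
    simp [Lmat, h1, h2]
  · simp [Lmat, h1]

theorem sum_Lmat_apply (Q : Fin m → Matrix (Fin n) (Fin n) ℝ) (x : Idx n m → ℝ)
    (k : Idx n m) : ∑ l, Lmat Q x k l = 0 := by
  rw [Fintype.sum_prod_type, Finset.sum_eq_single k.1
    (fun γ _ hγ => Finset.sum_eq_zero fun j _ => by simp [Lmat, Ne.symm hγ]) (by simp),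
    ← Finset.add_sum_erase _ _ (Finset.mem_univ k.2)]
  have hdiag : Lmat Q x k (k.1, k.2) =
      ∑ j ∈ Finset.univ.erase k.2, Q k.1 j k.2 * x (k.1, j) / x k := by
    simp [Lmat, Finset.filter_ne']
  have hoff (j : Fin n) (hj : j ∈ Finset.univ.erase k.2) :
      Lmat Q x k (k.1, j) = -(Q k.1 j k.2 * x (k.1, j) / x k) := by
    simp [Lmat, (Finset.ne_of_mem_erase hj).symm]
  rw [hdiag, Finset.sum_congr rfl hoff, Finset.sum_neg_distrib, add_neg_cancel]

variable {β δ : Fin n → ℝ} {Q : Fin m → Matrix (Fin n) (Fin n) ℝ} {x : Idx n m → ℝ}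

theorem Bmat_mul_Fmat_apply_pos (hβ : ∀ i, 0 < β i) (hx : ∀ k, 0 < x k) {k l : Idx n m}
    (hkl : l.2 = k.2) : 0 < (Bmat n m β * Fmat x) k l := by
  rw [Bmat_mul_Fmat_apply, if_pos hkl]
  exact mul_pos (hβ _) (div_pos (hx _)
    (Finset.sum_pos' (fun η _ => (hx _).le) ⟨l.1, Finset.mem_univ _, hx _⟩))

theorem Bmat_mul_Fmat_apply_nonneg (hβ : ∀ i, 0 ≤ β i) (hx : ∀ k, 0 ≤ x k) (k l : Idx n m) :
    0 ≤ (Bmat n m β * Fmat x) k l := by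
  rw [Bmat_mul_Fmat_apply]
  split_ifs
  · exact mul_nonneg (hβ _) (div_nonneg (hx _) (Finset.sum_nonneg fun η _ => hx _))
  · exact le_rfl

theorem Lmat_apply_nonpos (hQ : ∀ α i j, i ≠ j → 0 ≤ Q α i j) (hx : ∀ k, 0 ≤ x k)
    {k l : Idx n m} (hkl : k ≠ l) : Lmat Q x k l ≤ 0 := by
  rw [Lmat_apply_of_ne Q x hkl]
  split_ifs with h1
  · have h2 : l.2 ≠ k.2 := fun h2 => hkl (Prod.ext h1 h2.symm)
    exact neg_nonpos.2 (div_nonneg (mul_nonneg (hQ _ _ _ h2) (hx _)) (hx _))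
  · exact le_rfl

theorem Dmat_add_Lmat_apply_of_ne {k l : Idx n m} (hkl : k ≠ l) :
    (Dmat n m δ + Lmat Q x) k l = Lmat Q x k l := by
  simp [Dmat, diagonal_apply_ne _ hkl]

theorem sum_Dmat_add_Lmat_apply (k : Idx n m) : ∑ l, (Dmat n m δ + Lmat Q x) k l = δ k.2 := by
  simp [Finset.sum_add_distrib, sum_Lmat_apply, Dmat, diagonal_apply]

theorem reflTransGen_sub_Dmat_add_Lmat (hβ : ∀ i, 0 < β i) (hQ : ∀ α i j, i ≠ j → 0 ≤ Q α i j)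
    (hQirr : ∀ α, StronglyConnected (Q α)) (hx : ∀ k, 0 < x k) (k l : Idx n m) :
    Relation.ReflTransGen
      (fun a b => a ≠ b ∧ 0 < (Bmat n m β * Fmat x - (Dmat n m δ + Lmat Q x)) a b) k l := by
  set G := Bmat n m β * Fmat x - (Dmat n m δ + Lmat Q x)
  have hG {a b : Idx n m} (hab : a ≠ b) :
      G a b = (Bmat n m β * Fmat x) a b - Lmat Q x a b := by
    simp only [G, Matrix.sub_apply, Dmat_add_Lmat_apply_of_ne hab]
  have hcross (a : Idx n m) (γ : Fin m) :
      Relation.ReflTransGen (fun a b => a ≠ b ∧ 0 < G a b) a (γ, a.2) := by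
    by_cases h : a = (γ, a.2)
    · rw [← h]
    refine Relation.ReflTransGen.single ⟨h, ?_⟩
    rw [hG h]
    linarith [Bmat_mul_Fmat_apply_pos hβ hx (k := a) (l := (γ, a.2)) rfl,
      Lmat_apply_nonpos hQ (fun k => (hx k).le) h]
  -- an edge `i → j` of `Q γ` gives the entry `G (γ, j) (γ, i) > 0`, so paths are reversed
  have hwithin (γ : Fin m) (i j : Fin n) :
      Relation.ReflTransGen (fun a b => a ≠ b ∧ 0 < G a b) (γ, i) (γ, j) := by
    refine Relation.ReflTransGen.lift (fun i => (γ, i)) (fun a b ⟨hba, hQba⟩ => ?_)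
      i j (Relation.reflTransGen_swap.2 (hQirr γ j i))
    have hab : ((γ, a) : Idx n m) ≠ (γ, b) := fun h => hba (congrArg Prod.snd h).symm
    refine ⟨hab, ?_⟩
    rw [hG hab, Lmat_apply_of_ne Q x hab, if_pos rfl]
    have := Bmat_mul_Fmat_apply_nonneg (fun i => (hβ i).le) (fun k => (hx k).le) (γ, a) (γ, b)
    have := div_pos (mul_pos hQba (hx (γ, b))) (hx (γ, a))
    simp only at this ⊢
    linarith
  exact (hcross k l.1).trans (hwithin l.1 k.2 l.2)

end Model

end SISMobility

theorem endemic_equilibrium_iff_general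
    (n m : ℕ) (hn : 2 ≤ n) (hm : 1 ≤ m)
    (Q : Fin m → Matrix (Fin n) (Fin n) ℝ)
    (hQgen : ∀ α, IsGenerator (Q α)) (hQirr : ∀ α, StronglyConnected (Q α))
    (β δ : Fin n → ℝ) (hβ : ∀ i, 0 < β i) (hδ : ∀ i, 0 ≤ δ i)
    (vα : Fin m → Fin n → ℝ) (hvαpos : ∀ α i, 0 < vα α i)
    (Npop : Fin m → ℝ) (hNpop : ∀ α, 0 < Npop α)
    (v : Idx n m → ℝ) (hv : ∀ k, v k = Npop k.1 * vα k.1 k.2) :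
    (∃ pbar : Idx n m → ℝ, (∀ k, 0 < pbar k ∧ pbar k ≤ 1) ∧
        (Bmat n m β * Fmat v - Dmat n m δ - Lmat Q v -
          Matrix.diagonal pbar * (Bmat n m β * Fmat v)).mulVec pbar = 0)
      ↔ 0 < muMax (Bmat n m β * Fmat v - Dmat n m δ - Lmat Q v) := by
  have : Nonempty (Idx n m) := ⟨(⟨0, hm⟩, ⟨0, by omega⟩)⟩
  have hvpos (k : Idx n m) : 0 < v k := hv k ▸ mul_pos (hNpop k.1) (hvαpos k.1 k.2)
  have hQ (α : Fin m) (i j : Fin n) (hij : i ≠ j) : 0 ≤ Q α i j := (hQgen α).1 i j hij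
  rw [sub_sub (Bmat n m β * Fmat v)]
  exact exists_endemic_iff_muMax_pos
    (Bmat_mul_Fmat_apply_nonneg (fun i => (hβ i).le) fun k => (hvpos k).le)
    (fun k => Bmat_mul_Fmat_apply_pos hβ hvpos rfl)
    (fun k l hkl => (Dmat_add_Lmat_apply_of_ne hkl).trans_le
      (Lmat_apply_nonpos hQ (fun k => (hvpos k).le) hkl))
    (fun k => (sum_Dmat_add_Lmat_apply k).symm ▸ hδ k.2)
    (reflTransGen_sub_Dmat_add_Lmat hβ hQ hQirr hvpos)

/-- Theorem 2 (iii): with `F* = F(v)` and `L* = L(v)`, there exists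
`p̄` with `0 ≪ p̄ ≤ 1` satisfying the endemic-equilibrium equation
`(B F* − D − L* − diag(p̄) B F*) p̄ = 0` if and only if `μ(B F* − D − L*) > 0`. -/
theorem endemic_equilibrium_iff
    (n m : ℕ) (hn : 2 ≤ n) (hm : 1 ≤ m)
    (Q : Fin m → Matrix (Fin n) (Fin n) ℝ)
    (hQgen : ∀ α, IsGenerator (Q α)) (hQirr : ∀ α, StronglyConnected (Q α))
    (β δ : Fin n → ℝ) (hβ : ∀ i, 0 < β i) (hδ : ∀ i, 0 ≤ δ i)
    (vα : Fin m → Fin n → ℝ) (hvαpos : ∀ α i, 0 < vα α i)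
    (hvαnorm : ∀ α, ∑ i, vα α i = 1)
    (hvαeig : ∀ α i, ∑ j, Q α j i * vα α j = 0)
    (Npop : Fin m → ℝ) (hNpop : ∀ α, 0 < Npop α)
    (v : Idx n m → ℝ) (hv : ∀ k, v k = Npop k.1 * vα k.1 k.2) :
    (∃ pbar : Idx n m → ℝ, (∀ k, 0 < pbar k ∧ pbar k ≤ 1) ∧
        (Bmat n m β * Fmat v - Dmat n m δ - Lmat Q v -
          Matrix.diagonal pbar * (Bmat n m β * Fmat v)).mulVec pbar = 0)
      ↔ 0 < muMax (Bmat n m β * Fmat v - Dmat n m δ - Lmat Q v) :=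
  endemic_equilibrium_iff_general n m hn hm Q hQgen hQirr β δ hβ hδ vα hvαpos Npop hNpop v hv
end

section
/- Consider the SIS model under multi-layer Markovian mobility, with F* = F(v), L* = L(v), and M = I − F*. Let s = min over all nm block-extended indices k of (δ_k − β_k), let Δ = D − B − sI (assume Δ ≠ 0), let w ≫ 0 be a left null vector of B M + L* (i.e., w^⊤(B M + L*) = 0) normalized so max_k w_k = 1, let W = diag(w), and let λ₂ be the second smallest eigenvalue of the symmetric matrix (1/2)(W(B M + L*) + (B M + L*)^⊤ W). If λ₂ / ((1 + √(1 + λ₂/Σ_k w_k(δ_k − β_k − s)))² · nm + 1) + s ≥ 0, then μ(B F* − D − L*) ≤ 0, where μ(G) is the largest real part of an eigenvalue of G. -/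
open Matrix Finset Filter

open SISMobility

/-!
Write `B F* − D − L* = −s I − (K + diag d)` with `K = B M + L*` and `d = δ − β − s ≥ 0`. For an
eigenpair `(ζ, u)` of `K + diag d`, weighting by `w` gives
`Re ζ · ∑ w_k |u_k|² = q(Re u) + q(Im u)` with `q(y) = yᵀ (S + diag (w d)) y`, where
`S = ½ (W K + Kᵀ W)` is a symmetric Laplacian (this is where `wᵀ K = 0` enters).
Split `y` into its mean `a` and a deviation of norm `ρ`: the spectral gap gives `yᵀ S y ≥ λ₂ ρ²`,
and `|y_k| ≥ |a| − ρ` gives `∑ w_k d_k y_k² ≥ (∑ w_k d_k) (|a| − ρ)²`. Whichever of `ρ` and `|a|`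
dominates, `q(y) ≥ c ‖y‖²` for the constant `c` of the hypothesis, so `Re ζ ≥ c` (as `w ≤ 1`), and
every eigenvalue `−s − ζ` of `B F* − D − L*` has real part `≤ −s − c ≤ 0`.
-/

lemma div_mul_sq_add_mul_sq_le {μ t N ρ : ℝ} (hμ : 0 ≤ μ) (ht : 0 < t) (hN : 0 < N)
    (hρ : 0 ≤ ρ) (a : ℝ) :
    μ / ((1 + √(1 + μ / t)) ^ 2 * N + 1) * (ρ ^ 2 + N * a ^ 2)
      ≤ μ * ρ ^ 2 + t * max (|a| - ρ) 0 ^ 2 := by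
  set g := 1 + √(1 + μ / t)
  have hg : √(μ / t) ≤ g - 1 := by
    simpa [g] using Real.sqrt_le_sqrt (by linarith : μ / t ≤ 1 + μ / t)
  have hden : 0 < g ^ 2 * N + 1 := by positivity
  set θ := √((ρ ^ 2 + N * a ^ 2) / (g ^ 2 * N + 1))
  have hθ0 : 0 ≤ θ := Real.sqrt_nonneg _
  have hθ : θ ^ 2 = (ρ ^ 2 + N * a ^ 2) / (g ^ 2 * N + 1) := Real.sq_sqrt (by positivity)
  rw [mul_comm, ← mul_div_assoc, mul_comm, mul_div_assoc, ← hθ]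
  -- If `ρ ≥ θ` the first term suffices; otherwise `|a| ≥ g θ`, and the second one does.
  rcases le_or_gt θ ρ with hθρ | hρθ
  · have : θ ^ 2 ≤ ρ ^ 2 := pow_le_pow_left₀ hθ0 hθρ 2
    nlinarith [sq_nonneg (max (|a| - ρ) 0)]
  · have hga : g * θ ≤ |a| := by
      have : (g * θ) ^ 2 ≤ |a| ^ 2 := by
        rw [sq_abs]
        have := hθ ▸ div_mul_cancel₀ (ρ ^ 2 + N * a ^ 2) hden.ne'
        nlinarith [pow_lt_pow_left₀ hρθ hρ two_ne_zero]
      exact (pow_le_pow_iff_left₀ (by positivity) (abs_nonneg a) two_ne_zero).1 this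
    have hθa : √(μ / t) * θ ≤ |a| - ρ := by
      nlinarith [mul_le_mul_of_nonneg_right hg hθ0]
    have hsq : μ / t * θ ^ 2 ≤ max (|a| - ρ) 0 ^ 2 := by
      rw [← Real.sq_sqrt (div_nonneg hμ ht.le), ← mul_pow]
      exact pow_le_pow_left₀ (by positivity) (hθa.trans (le_max_left _ _)) 2
    have : μ * θ ^ 2 = t * (μ / t * θ ^ 2) := by field_simp
    nlinarith [mul_le_mul_of_nonneg_left hsq ht.le, sq_nonneg ρ]

lemma sum_mul_pos_of_ne_zero {ι : Type*} [Fintype ι] {w d : ι → ℝ} (hw : ∀ k, 0 < w k)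
    (hd : ∀ k, 0 ≤ d k) (hd0 : d ≠ 0) : 0 < ∑ k, w k * d k := by
  obtain ⟨k, hk⟩ := Function.ne_iff.1 hd0
  exact Finset.sum_pos' (fun k _ => mul_nonneg (hw k).le (hd k))
    ⟨k, Finset.mem_univ k, mul_pos (hw k) ((hd k).lt_of_ne' hk)⟩

section SecondSmallest

variable {ι : Type*} [Fintype ι]

/-- Counted with multiplicity; `0` if `ι` has fewer than two elements. -/
noncomputable def secondSmallest (f : ι → ℝ) : ℝ :=
  (Multiset.sort (univ.val.map f) (· ≤ ·)).getD 1 0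

lemma secondSmallest_nonneg {f : ι → ℝ} (hf : ∀ i, 0 ≤ f i) : 0 ≤ secondSmallest f := by
  rw [secondSmallest, List.getD_eq_getElem?_getD]
  cases h : (Multiset.sort (univ.val.map f) (· ≤ ·))[1]? with
  | none => simp
  | some y =>
    obtain ⟨i, -, rfl⟩ := Multiset.mem_map.1 <| (Multiset.mem_sort _).1 (List.mem_of_getElem? h)
    exact hf i

lemma card_filter_lt_secondSmallest_le_one (f : ι → ℝ) :
    #{i | f i < secondSmallest f} ≤ 1 := by
  classical
  obtain ⟨L, hL⟩ : ∃ L, Multiset.sort (univ.val.map f) (· ≤ ·) = L := ⟨_, rfl⟩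
  have hsorted : L.Pairwise (· ≤ ·) := hL ▸ Multiset.pairwise_sort _ _
  have hcount : ∀ μ, #{i | f i < μ} = L.countP (· < μ) := fun μ => by
    rw [← Multiset.coe_countP, ← hL, Multiset.sort_eq, Multiset.countP_map]
    rfl
  rw [hcount, secondSmallest, hL]
  rcases L with _ | ⟨a, _ | ⟨b, tl⟩⟩
  · simp
  · exact List.countP_le_length.trans (by simp)
  · show (a :: b :: tl).countP (· < b) ≤ 1
    have hb : ∀ y ∈ b :: tl, b ≤ y := by
      simpa using (List.pairwise_cons.1 (List.pairwise_cons.1 hsorted).2).1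
    rw [List.countP_cons, List.countP_eq_zero.2 fun y hy => by simpa using hb y hy]
    split_ifs <;> simp

end SecondSmallest

namespace Matrix

variable {ι : Type*} [Fintype ι]

def IsLaplacian (M : Matrix ι ι ℝ) : Prop :=
  (∀ k, ∑ l, M k l = 0) ∧ ∀ k l, k ≠ l → M k l ≤ 0

namespace IsLaplacian

variable {M N : Matrix ι ι ℝ}

lemma mulVec_one (hM : M.IsLaplacian) : M *ᵥ 1 = 0 := by
  ext k
  simpa [mulVec, dotProduct] using hM.1 k

lemma add (hM : M.IsLaplacian) (hN : N.IsLaplacian) : (M + N).IsLaplacian :=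
  ⟨fun k => by simp [Finset.sum_add_distrib, hM.1 k, hN.1 k],
    fun k l hkl => add_nonpos (hM.2 k l hkl) (hN.2 k l hkl)⟩

lemma one_sub [DecidableEq ι] {F : Matrix ι ι ℝ} (hF0 : ∀ k l, 0 ≤ F k l)
    (hF1 : ∀ k, ∑ l, F k l = 1) : (1 - F).IsLaplacian :=
  ⟨fun k => by simp [Finset.sum_sub_distrib, hF1, one_apply],
    fun k l hkl => by simpa [one_apply_ne hkl] using hF0 k l⟩

lemma diagonal_mul [DecidableEq ι] (hM : M.IsLaplacian) {d : ι → ℝ} (hd : ∀ k, 0 ≤ d k) :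
    (diagonal d * M).IsLaplacian :=
  ⟨fun k => by simp [← Finset.mul_sum, hM.1 k],
    fun k l hkl => by simpa using mul_nonpos_of_nonneg_of_nonpos (hd k) (hM.2 k l hkl)⟩

lemma half_smul_diagonal_mul_add [DecidableEq ι] (hM : M.IsLaplacian) {w : ι → ℝ}
    (hw : ∀ k, 0 ≤ w k) (hwM : w ᵥ* M = 0) :
    ((1 / 2 : ℝ) • (diagonal w * M + Mᵀ * diagonal w)).IsLaplacian := by
  refine ⟨fun k => ?_, fun k l hkl => ?_⟩
  · have hcol : ∑ l, M l k * w l = 0 := by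
      simpa [vecMul, dotProduct, mul_comm] using congrFun hwM k
    simp [mul_diagonal, Finset.sum_add_distrib, ← Finset.mul_sum, hM.1 k, hcol]
  · have := mul_nonpos_of_nonneg_of_nonpos (hw k) (hM.2 k l hkl)
    have := mul_nonpos_of_nonneg_of_nonpos (hw l) (hM.2 l k hkl.symm)
    simp only [smul_apply, add_apply, Matrix.diagonal_mul, mul_diagonal, transpose_apply,
      smul_eq_mul]
    nlinarith

lemma dotProduct_mulVec_eq_sum_sq (hM : M.IsLaplacian) (hsymm : Mᵀ = M) (x : ι → ℝ) :
    x ⬝ᵥ M *ᵥ x = (1 / 2) * ∑ k, ∑ l, -M k l * (x k - x l) ^ 2 := by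
  have hrow : ∑ k, ∑ l, M k l * x k ^ 2 = 0 := by
    simp [← Finset.sum_mul, hM.1]
  have hcol : ∑ k, ∑ l, M k l * x l ^ 2 = 0 := by
    have hcolsum : ∀ l, ∑ k, M k l = 0 := fun l => by
      rw [← hM.1 l]; exact Finset.sum_congr rfl fun k _ => congrFun₂ hsymm l k
    rw [Finset.sum_comm]
    simp [← Finset.sum_mul, hcolsum]
  have hexpand : ∀ k l, -M k l * (x k - x l) ^ 2
      = 2 * (M k l * (x k * x l)) - M k l * x k ^ 2 - M k l * x l ^ 2 := fun k l => by ring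
  simp_rw [hexpand, Finset.sum_sub_distrib, hrow, hcol, sub_zero, ← Finset.mul_sum, ← mul_assoc,
    one_div_mul_cancel (two_ne_zero' ℝ), one_mul, dotProduct, mulVec, dotProduct, Finset.mul_sum]
  exact Finset.sum_congr rfl fun k _ => Finset.sum_congr rfl fun l _ => by ring

lemma posSemidef (hM : M.IsLaplacian) (hsymm : M.IsHermitian) : M.PosSemidef := by
  refine posSemidef_iff_dotProduct_mulVec.2 ⟨hsymm, fun x => ?_⟩
  rw [star_trivial,
    hM.dotProduct_mulVec_eq_sum_sq (conjTranspose_eq_transpose_of_trivial M ▸ hsymm.eq)]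
  refine mul_nonneg (by norm_num) (Finset.sum_nonneg fun k _ => Finset.sum_nonneg fun l _ => ?_)
  rcases eq_or_ne k l with rfl | hkl
  · simp
  · exact mul_nonneg (neg_nonneg.2 (hM.2 k l hkl)) (sq_nonneg _)

end IsLaplacian

lemma dotProduct_mulVec_half_smul_add_transpose (M : Matrix ι ι ℝ) (x : ι → ℝ) :
    x ⬝ᵥ ((1 / 2 : ℝ) • (M + Mᵀ)) *ᵥ x = x ⬝ᵥ M *ᵥ x := by
  have hT : x ⬝ᵥ Mᵀ *ᵥ x = x ⬝ᵥ M *ᵥ x := by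
    rw [dotProduct_mulVec, vecMul_transpose, dotProduct_comm]
  rw [smul_mulVec, add_mulVec, dotProduct_smul, dotProduct_add, hT, smul_eq_mul]
  ring

lemma dotProduct_mulVec_sub_smul_one {S : Matrix ι ι ℝ} (hS : Sᵀ = S) (hS1 : S *ᵥ 1 = 0)
    (x : ι → ℝ) (a : ℝ) : (x - a • 1) ⬝ᵥ S *ᵥ (x - a • 1) = x ⬝ᵥ S *ᵥ x := by
  have h1S : 1 ⬝ᵥ S *ᵥ x = 0 := by
    rw [dotProduct_mulVec, ← hS, vecMul_transpose, hS1, zero_dotProduct]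
  simp [mulVec_sub, mulVec_smul, hS1, sub_dotProduct, h1S]

lemma dotProduct_self_eq_sub_mean [Nonempty ι] (x : ι → ℝ) :
    x ⬝ᵥ x = (x - (1 ⬝ᵥ x / Fintype.card ι) • 1) ⬝ᵥ (x - (1 ⬝ᵥ x / Fintype.card ι) • 1)
      + Fintype.card ι * (1 ⬝ᵥ x / Fintype.card ι) ^ 2 := by
  have hN : (Fintype.card ι : ℝ) ≠ 0 := by positivity
  simp only [dotProduct_sub, sub_dotProduct, smul_dotProduct, dotProduct_smul, smul_eq_mul,
    dotProduct_comm x 1, one_dotProduct_one]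
  field_simp
  ring

lemma mul_max_sq_le_dotProduct_diagonal_mulVec [DecidableEq ι] {d : ι → ℝ} (hd : ∀ k, 0 ≤ d k)
    (x : ι → ℝ) (a : ℝ) :
    (∑ k, d k) * max (|a| - √((x - a • 1) ⬝ᵥ (x - a • 1))) 0 ^ 2 ≤ x ⬝ᵥ diagonal d *ᵥ x := by
  set ρ := √((x - a • 1) ⬝ᵥ (x - a • 1))
  have hk : ∀ k, max (|a| - ρ) 0 ^ 2 ≤ x k ^ 2 := fun k => by
    have hρ : |x k - a| ≤ ρ := by
      rw [← Real.sqrt_sq_eq_abs]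
      refine Real.sqrt_le_sqrt ?_
      simpa [dotProduct, sq] using
        Finset.single_le_sum (fun l _ => mul_self_nonneg (x l - a)) (Finset.mem_univ k)
    rw [← sq_abs (x k)]
    refine pow_le_pow_left₀ (le_max_right _ _) (max_le ?_ (abs_nonneg _)) 2
    linarith [abs_sub_abs_le_abs_sub a (x k), abs_sub_comm a (x k)]
  calc (∑ k, d k) * max (|a| - ρ) 0 ^ 2 = ∑ k, d k * max (|a| - ρ) 0 ^ 2 := Finset.sum_mul ..
    _ ≤ ∑ k, d k * x k ^ 2 :=
      Finset.sum_le_sum fun k _ => mul_le_mul_of_nonneg_left (hk k) (hd k)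
    _ = x ⬝ᵥ diagonal d *ᵥ x := by
      simp only [dotProduct, mulVec_diagonal]
      exact Finset.sum_congr rfl fun k _ => by ring

namespace IsHermitian

variable [DecidableEq ι] {S : Matrix ι ι ℝ}

lemma eigenvectorBasis_dotProduct_mulVec (hS : S.IsHermitian) (i : ι) (x : ι → ℝ) :
    hS.eigenvectorBasis i ⬝ᵥ S *ᵥ x = hS.eigenvalues i * (hS.eigenvectorBasis i ⬝ᵥ x) := by
  rw [dotProduct_mulVec, ← mulVec_transpose, ← conjTranspose_eq_transpose_of_trivial, hS.eq,
    hS.mulVec_eigenvectorBasis, smul_dotProduct, smul_eq_mul]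

lemma sum_eigenvectorBasis_dotProduct_mul (hS : S.IsHermitian) (x y : ι → ℝ) :
    ∑ i, (hS.eigenvectorBasis i ⬝ᵥ x) * (hS.eigenvectorBasis i ⬝ᵥ y) = x ⬝ᵥ y := by
  simpa [EuclideanSpace.inner_eq_star_dotProduct, dotProduct_comm] using
    hS.eigenvectorBasis.sum_inner_mul_inner (WithLp.toLp 2 x) (WithLp.toLp 2 y)

lemma sum_eigenvectorBasis_dotProduct_sq (hS : S.IsHermitian) (x : ι → ℝ) :
    ∑ i, (hS.eigenvectorBasis i ⬝ᵥ x) ^ 2 = x ⬝ᵥ x := by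
  simpa [sq] using hS.sum_eigenvectorBasis_dotProduct_mul x x

lemma dotProduct_mulVec_eq_sum (hS : S.IsHermitian) (x : ι → ℝ) :
    x ⬝ᵥ S *ᵥ x = ∑ i, hS.eigenvalues i * (hS.eigenvectorBasis i ⬝ᵥ x) ^ 2 := by
  rw [← hS.sum_eigenvectorBasis_dotProduct_mul]
  simp_rw [hS.eigenvectorBasis_dotProduct_mulVec]
  exact Finset.sum_congr rfl fun i _ => by ring

/-- Every other eigenvalue is positive, so the other eigenvectors are orthogonal to the kernel
vector `1`, and the `i`-th one is a multiple of `1`. -/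
lemma eigenvectorBasis_dotProduct_eq_zero (hS : S.IsHermitian) (hS1 : S *ᵥ 1 = 0) {μ : ℝ}
    (hμ : 0 < μ) (hfew : #{i | hS.eigenvalues i < μ} ≤ 1) {i : ι} (hi : hS.eigenvalues i < μ)
    {y : ι → ℝ} (hy : 1 ⬝ᵥ y = 0) : hS.eigenvectorBasis i ⬝ᵥ y = 0 := by
  have horth : ∀ j ≠ i, hS.eigenvectorBasis j ⬝ᵥ 1 = 0 := fun j hji => by
    have hj : μ ≤ hS.eigenvalues j := not_lt.1 fun hj =>
      hji (Finset.card_le_one.1 hfew j (by simpa using hj) i (by simpa using hi))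
    have := hS.eigenvectorBasis_dotProduct_mulVec j 1
    rw [hS1, dotProduct_zero, eq_comm, mul_eq_zero] at this
    exact this.resolve_left (hμ.trans_le hj).ne'
  have hsum : ∀ z, (hS.eigenvectorBasis i ⬝ᵥ 1) * (hS.eigenvectorBasis i ⬝ᵥ z) = 1 ⬝ᵥ z :=
    fun z => by
      rw [← hS.sum_eigenvectorBasis_dotProduct_mul 1 z, Finset.sum_eq_single i
        (fun j _ hji => by rw [horth j hji, zero_mul]) (by simp)]
  have hone : hS.eigenvectorBasis i ⬝ᵥ 1 ≠ 0 := fun h => by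
    have h11 := hsum 1
    rw [h, zero_mul] at h11
    have : 0 < (1 : ι → ℝ) ⬝ᵥ 1 := by simpa [dotProduct] using Fintype.card_pos_iff.2 ⟨i⟩
    linarith
  exact (mul_eq_zero.1 ((hsum y).trans hy)).resolve_left hone

lemma mul_dotProduct_self_le_dotProduct_mulVec (hS : S.IsHermitian) (hS1 : S *ᵥ 1 = 0)
    {μ : ℝ} (hμ : 0 < μ) (hfew : #{i | hS.eigenvalues i < μ} ≤ 1) {y : ι → ℝ}
    (hy : 1 ⬝ᵥ y = 0) : μ * (y ⬝ᵥ y) ≤ y ⬝ᵥ S *ᵥ y := by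
  rw [hS.dotProduct_mulVec_eq_sum, ← hS.sum_eigenvectorBasis_dotProduct_sq, Finset.mul_sum]
  refine Finset.sum_le_sum fun i _ => ?_
  rcases le_or_gt μ (hS.eigenvalues i) with hi | hi
  · exact mul_le_mul_of_nonneg_right hi (sq_nonneg _)
  · simp [hS.eigenvectorBasis_dotProduct_eq_zero hS1 hμ hfew hi hy]

end IsHermitian

lemma PosSemidef.mul_dotProduct_self_le [DecidableEq ι] {S : Matrix ι ι ℝ} (hS : S.PosSemidef)
    (hS1 : S *ᵥ 1 = 0) {μ : ℝ} (hμ : 0 ≤ μ) (hfew : #{i | hS.1.eigenvalues i < μ} ≤ 1)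
    {d : ι → ℝ} (hd : ∀ k, 0 ≤ d k) (ht : 0 < ∑ k, d k) (x : ι → ℝ) :
    μ / ((1 + √(1 + μ / ∑ k, d k)) ^ 2 * Fintype.card ι + 1) * (x ⬝ᵥ x)
      ≤ x ⬝ᵥ (S + diagonal d) *ᵥ x := by
  have : Nonempty ι := by
    by_contra h
    simp [not_nonempty_iff.1 h] at ht
  set a := 1 ⬝ᵥ x / Fintype.card ι
  set y := x - a • 1
  have hy : 1 ⬝ᵥ y = 0 := by simp [y, a, dotProduct_sub]
  have hSy : μ * (y ⬝ᵥ y) ≤ x ⬝ᵥ S *ᵥ x := by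
    rw [← dotProduct_mulVec_sub_smul_one
      (conjTranspose_eq_transpose_of_trivial S ▸ hS.1.eq) hS1 x a]
    rcases hμ.eq_or_lt with rfl | hμ
    · simpa only [zero_mul, star_trivial] using hS.dotProduct_mulVec_nonneg y
    · exact hS.1.mul_dotProduct_self_le_dotProduct_mulVec hS1 hμ hfew hy
  have hdiag := mul_max_sq_le_dotProduct_diagonal_mulVec hd x a
  have hscalar := div_mul_sq_add_mul_sq_le hμ ht (by positivity : (0 : ℝ) < Fintype.card ι)
    (Real.sqrt_nonneg (y ⬝ᵥ y)) a
  rw [Real.sq_sqrt (by simpa using dotProduct_star_self_nonneg y)] at hscalar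
  rw [add_mulVec, dotProduct_add, dotProduct_self_eq_sub_mean x]
  linarith

lemma IsLaplacian.mul_dotProduct_self_le [DecidableEq ι] {K : Matrix ι ι ℝ} (hK : K.IsLaplacian)
    {w : ι → ℝ} (hw : ∀ k, 0 ≤ w k) (hwK : w ᵥ* K = 0)
    (hS : ((1 / 2 : ℝ) • (diagonal w * K + Kᵀ * diagonal w)).IsHermitian)
    {d : ι → ℝ} (hd : ∀ k, 0 ≤ d k) (hwd : 0 < ∑ k, w k * d k) (y : ι → ℝ) :
    secondSmallest hS.eigenvalues / ((1 + √(1 + secondSmallest hS.eigenvalues / ∑ k, w k * d k))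
      ^ 2 * Fintype.card ι + 1) * (y ⬝ᵥ y) ≤ y ⬝ᵥ (diagonal w * (K + diagonal d)) *ᵥ y := by
  have hSL := hK.half_smul_diagonal_mul_add hw hwK
  have hWK : Kᵀ * diagonal w = (diagonal w * K)ᵀ := by rw [transpose_mul, diagonal_transpose]
  have := (hSL.posSemidef hS).mul_dotProduct_self_le hSL.mulVec_one
    (secondSmallest_nonneg (hSL.posSemidef hS).eigenvalues_nonneg)
    (card_filter_lt_secondSmallest_le_one _) (fun k => mul_nonneg (hw k) (hd k)) hwd y
  refine this.trans_eq ?_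
  rw [add_mulVec, dotProduct_add, hWK, dotProduct_mulVec_half_smul_add_transpose,
    ← dotProduct_add, ← add_mulVec, ← diagonal_mul_diagonal, ← mul_add]

lemma re_star_dotProduct_map_mulVec (A : Matrix ι ι ℝ) (u : ι → ℂ) :
    (star u ⬝ᵥ A.map (algebraMap ℝ ℂ) *ᵥ u).re
      = (fun k => (u k).re) ⬝ᵥ A *ᵥ (fun k => (u k).re)
        + (fun k => (u k).im) ⬝ᵥ A *ᵥ (fun k => (u k).im) := by
  simp only [dotProduct, mulVec, Finset.mul_sum, Complex.re_sum, ← Finset.sum_add_distrib]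
  refine Finset.sum_congr rfl fun k _ => Finset.sum_congr rfl fun l _ => ?_
  simp [Complex.mul_re]

lemma le_re_of_mem_spectrum [DecidableEq ι] {A : Matrix ι ι ℝ} {w : ι → ℝ} (hw0 : ∀ k, 0 < w k)
    (hw1 : ∀ k, w k ≤ 1) {c : ℝ} (hc : 0 ≤ c)
    (hA : ∀ y, c * (y ⬝ᵥ y) ≤ y ⬝ᵥ (diagonal w * A) *ᵥ y) {ζ : ℂ}
    (hζ : ζ ∈ spectrum ℂ (A.map (algebraMap ℝ ℂ))) : c ≤ ζ.re := by
  rw [← spectrum_toLin', ← Module.End.hasEigenvalue_iff_mem_spectrum] at hζ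
  obtain ⟨u, hu⟩ := hζ.exists_hasEigenvector
  have hAu : A.map (algebraMap ℝ ℂ) *ᵥ u = ζ • u := hu.apply_eq_smul
  set re : ι → ℝ := fun k => (u k).re
  set im : ι → ℝ := fun k => (u k).im
  set P := ∑ k, w k * Complex.normSq (u k)
  have hP : 0 < P := by
    obtain ⟨k, hk⟩ := Function.ne_iff.1 hu.2
    exact Finset.sum_pos' (fun k _ => mul_nonneg (hw0 k).le (Complex.normSq_nonneg _))
      ⟨k, Finset.mem_univ k, mul_pos (hw0 k) (Complex.normSq_pos.2 hk)⟩
  have hre : ζ.re * P = re ⬝ᵥ (diagonal w * A) *ᵥ re + im ⬝ᵥ (diagonal w * A) *ᵥ im := by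
    have hwu : star u ⬝ᵥ (diagonal fun k => algebraMap ℝ ℂ (w k)) *ᵥ u = (P : ℂ) := by
      simp only [P, dotProduct, mulVec_diagonal, Complex.ofReal_sum, Complex.ofReal_mul,
        Complex.normSq_eq_conj_mul_self]
      exact Finset.sum_congr rfl fun k _ => by simp; ring
    rw [← re_star_dotProduct_map_mulVec, Matrix.map_mul, diagonal_map (map_zero _),
      ← mulVec_mulVec, hAu, mulVec_smul, dotProduct_smul, hwu, smul_eq_mul,
      Complex.re_mul_ofReal]
  have hPle : P ≤ re ⬝ᵥ re + im ⬝ᵥ im := by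
    simp only [P, dotProduct, ← Finset.sum_add_distrib]
    exact Finset.sum_le_sum fun k _ => by
      nlinarith [hw1 k, Complex.normSq_nonneg (u k), Complex.normSq_apply (u k)]
  nlinarith [hA re, hA im]

end Matrix

namespace SISMobility

variable {n m : ℕ}

lemma muMax_algebraMap_sub_nonpos {ι : Type*} [Fintype ι] [DecidableEq ι] {A : Matrix ι ι ℝ}
    {r : ℝ} (hA : ∀ ζ ∈ spectrum ℂ (A.map (algebraMap ℝ ℂ)), r ≤ ζ.re) :
    muMax (algebraMap ℝ (Matrix ι ι ℝ) r - A) ≤ 0 := by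
  have hmap : (algebraMap ℝ _ r - A).map (algebraMap ℝ ℂ)
      = algebraMap ℂ (Matrix ι ι ℂ) r - A.map (algebraMap ℝ ℂ) := by
    ext i j
    by_cases h : i = j <;> simp [Algebra.algebraMap_eq_smul_one, one_apply, h]
  refine Real.sSup_le ?_ le_rfl
  rintro _ ⟨z, hz, rfl⟩
  rw [hmap, ← spectrum.singleton_sub_eq] at hz
  obtain ⟨_, rfl, ζ, hζ, rfl⟩ := hz
  simpa using hA ζ hζ

lemma Fmat_nonneg {x : Idx n m → ℝ} (hx : ∀ k, 0 < x k) (k l : Idx n m) : 0 ≤ Fmat x k l := by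
  unfold Fmat
  split_ifs
  · exact div_nonneg (hx _).le (Finset.sum_nonneg fun η _ => (hx _).le)
  · rfl

lemma sum_Fmat_apply {x : Idx n m → ℝ} (hx : ∀ k, 0 < x k) (k : Idx n m) :
    ∑ l, Fmat x k l = 1 := by
  have hpos : 0 < ∑ η : Fin m, x (η, k.2) :=
    Finset.sum_pos (fun η _ => hx _) ⟨k.1, Finset.mem_univ _⟩
  simp [Fmat, Fintype.sum_prod_type, ← Finset.sum_div, hpos.ne']

lemma isLaplacian_Lmat {Q : Fin m → Matrix (Fin n) (Fin n) ℝ}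
    (hQ : ∀ α i j, i ≠ j → 0 ≤ Q α i j) {x : Idx n m → ℝ} (hx : ∀ k, 0 < x k) :
    (Lmat Q x).IsLaplacian := by
  refine ⟨fun k => ?_, fun k l hkl => ?_⟩
  · rw [Fintype.sum_prod_type, Finset.sum_eq_single k.1
      (fun α _ hα => by simp [Lmat, Ne.symm hα]) (by simp),
      ← Finset.sum_filter_add_sum_filter_not univ (· ≠ k.2)]
    have hoff : ∀ j ∈ univ.filter (· ≠ k.2),
        Lmat Q x k (k.1, j) = -(Q k.1 j k.2 * x (k.1, j) / x k) :=
      fun j hj => by simp [Lmat, Ne.symm (Finset.mem_filter.1 hj).2]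
    rw [Finset.sum_congr rfl hoff]
    simp [Lmat, Finset.filter_eq']
  · unfold Lmat
    split_ifs with h1 h2
    · exact absurd (Prod.ext h1 h2) hkl
    · exact neg_nonpos.2 (div_nonneg (mul_nonneg (hQ _ _ _ (Ne.symm h2)) (hx _).le) (hx _).le)
    · rfl

lemma isLaplacian_Bmat_mul_one_sub_Fmat_add_Lmat {β : Fin n → ℝ} (hβ : ∀ i, 0 ≤ β i)
    {Q : Fin m → Matrix (Fin n) (Fin n) ℝ} (hQ : ∀ α i j, i ≠ j → 0 ≤ Q α i j)
    {x : Idx n m → ℝ} (hx : ∀ k, 0 < x k) :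
    (Bmat n m β * (1 - Fmat x) + Lmat Q x).IsLaplacian :=
  ((IsLaplacian.one_sub (Fmat_nonneg hx) (sum_Fmat_apply hx)).diagonal_mul
    fun k => hβ k.2).add (isLaplacian_Lmat hQ hx)

end SISMobility

theorem lambda2_sufficient_condition_general
    (n m : ℕ)
    (Q : Fin m → Matrix (Fin n) (Fin n) ℝ)
    (hQgen : ∀ α, IsGenerator (Q α))
    (β δ : Fin n → ℝ) (hβ : ∀ i, 0 < β i)
    (vα : Fin m → Fin n → ℝ) (hvαpos : ∀ α i, 0 < vα α i)
    (Npop : Fin m → ℝ) (hNpop : ∀ α, 0 < Npop α)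
    (v : Idx n m → ℝ) (hv : ∀ k, v k = Npop k.1 * vα k.1 k.2)
    -- `K = B M + L*` with `M = I − F*`
    (K : Matrix (Idx n m) (Idx n m) ℝ)
    (hK : K = Bmat n m β * (1 - Fmat v) + Lmat Q v)
    -- `s = min_k (δ_k − β_k)`
    (s : ℝ) (hs : IsLeast (Set.range fun i : Fin n => δ i - β i) s)
    -- `Δ = D − B − s I ≠ 0`
    (hΔ : Dmat n m δ - Bmat n m β - s • (1 : Matrix (Idx n m) (Idx n m) ℝ) ≠ 0)
    -- `w ≫ 0` left null vector of `K`, normalized so that `max_k w_k = 1`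
    (w : Idx n m → ℝ) (hwpos : ∀ k, 0 < w k)
    (hwnull : Matrix.vecMul w K = 0)
    (hwle : ∀ k, w k ≤ 1)
    -- `λ₂` is the second smallest eigenvalue of `(1/2)(W K + Kᵀ W)`
    (S : Matrix (Idx n m) (Idx n m) ℝ)
    (hSdef : S = (1 / 2 : ℝ) • (Matrix.diagonal w * K + Kᵀ * Matrix.diagonal w))
    (hS : S.IsHermitian)
    (lam2 : ℝ)
    (hlam2 : lam2 = (Multiset.sort (Finset.univ.val.map hS.eigenvalues) (· ≤ ·)).getD 1 0)
    -- the sufficient condition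
    (hcond : 0 ≤ lam2 /
        ((1 + Real.sqrt (1 + lam2 / ∑ k : Idx n m, w k * (δ k.2 - β k.2 - s))) ^ 2
          * (n * m : ℝ) + 1) + s) :
    muMax (Bmat n m β * Fmat v - Dmat n m δ - Lmat Q v) ≤ 0 := by
  have hvpos : ∀ k, 0 < v k := fun k => hv k ▸ mul_pos (hNpop _) (hvαpos _ _)
  set d : Idx n m → ℝ := fun k => δ k.2 - β k.2 - s
  have hd : ∀ k, 0 ≤ d k := fun k => sub_nonneg.2 (hs.2 ⟨k.2, rfl⟩)
  have hΔd : Dmat n m δ - Bmat n m β - s • 1 = diagonal d := by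
    simp [Dmat, Bmat, d, smul_one_eq_diagonal]
  have hwd := sum_mul_pos_of_ne_zero hwpos hd fun h => hΔ (hΔd.trans (by simp [h]))
  have hKL : K.IsLaplacian := hK ▸ isLaplacian_Bmat_mul_one_sub_Fmat_add_Lmat
    (fun i => (hβ i).le) (fun α => (hQgen α).1) hvpos
  have hw0 : ∀ k, 0 ≤ w k := fun k => (hwpos k).le
  subst hSdef
  have hlam2' : lam2 = secondSmallest hS.eigenvalues := hlam2
  have hlam0 : 0 ≤ lam2 := hlam2' ▸ secondSmallest_nonneg
    ((hKL.half_smul_diagonal_mul_add hw0 hwnull).posSemidef hS).eigenvalues_nonneg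
  have hform := hKL.mul_dotProduct_self_le hw0 hwnull hS hd hwd
  have hcard : (Fintype.card (Idx n m) : ℝ) = n * m := by simp [mul_comm]
  rw [← hlam2', hcard] at hform
  have hG : Bmat n m β * Fmat v - Dmat n m δ - Lmat Q v
      = algebraMap ℝ _ (-s) - (K + diagonal d) := by
    rw [hK, ← hΔd, Algebra.algebraMap_eq_smul_one, neg_smul, mul_sub, mul_one]
    abel
  rw [hG]
  refine muMax_algebraMap_sub_nonpos fun ζ hζ => ?_
  have := le_re_of_mem_spectrum hwpos hwle (div_nonneg hlam0 (by positivity)) hform hζ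
  linarith

/-- Corollary 1 (iv): with `M = I − F*`, `s = min_k (δ_k − β_k)`,
`Δ = D − B − sI ≠ 0`, `w ≫ 0` a left null vector of `B M + L*` normalized so that
`max_k w_k = 1`, `W = diag w`, and `λ₂` the second smallest eigenvalue of
`(1/2)(W(BM+L*) + (BM+L*)ᵀ W)`, if
`λ₂ / ((1 + √(1 + λ₂/∑_k w_k(δ_k − β_k − s)))² nm + 1) + s ≥ 0` then
`μ(B F* − D − L*) ≤ 0`. -/
theorem lambda2_sufficient_condition
    (n m : ℕ) (hn : 2 ≤ n) (hm : 1 ≤ m)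
    (Q : Fin m → Matrix (Fin n) (Fin n) ℝ)
    (hQgen : ∀ α, IsGenerator (Q α)) (hQirr : ∀ α, StronglyConnected (Q α))
    (β δ : Fin n → ℝ) (hβ : ∀ i, 0 < β i) (hδ : ∀ i, 0 ≤ δ i)
    (vα : Fin m → Fin n → ℝ) (hvαpos : ∀ α i, 0 < vα α i)
    (hvαnorm : ∀ α, ∑ i, vα α i = 1)
    (hvαeig : ∀ α i, ∑ j, Q α j i * vα α j = 0)
    (Npop : Fin m → ℝ) (hNpop : ∀ α, 0 < Npop α)
    (v : Idx n m → ℝ) (hv : ∀ k, v k = Npop k.1 * vα k.1 k.2)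
    -- `K = B M + L*` with `M = I − F*`
    (K : Matrix (Idx n m) (Idx n m) ℝ)
    (hK : K = Bmat n m β * (1 - Fmat v) + Lmat Q v)
    -- `s = min_k (δ_k − β_k)`
    (s : ℝ) (hs : IsLeast (Set.range fun i : Fin n => δ i - β i) s)
    -- `Δ = D − B − s I ≠ 0`
    (hΔ : Dmat n m δ - Bmat n m β - s • (1 : Matrix (Idx n m) (Idx n m) ℝ) ≠ 0)
    -- `w ≫ 0` left null vector of `K`, normalized so that `max_k w_k = 1`
    (w : Idx n m → ℝ) (hwpos : ∀ k, 0 < w k)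
    (hwnull : Matrix.vecMul w K = 0)
    (hwle : ∀ k, w k ≤ 1) (hwmax : ∃ k, w k = 1)
    -- `λ₂` is the second smallest eigenvalue of `(1/2)(W K + Kᵀ W)`
    (S : Matrix (Idx n m) (Idx n m) ℝ)
    (hSdef : S = (1 / 2 : ℝ) • (Matrix.diagonal w * K + Kᵀ * Matrix.diagonal w))
    (hS : S.IsHermitian)
    (lam2 : ℝ)
    (hlam2 : lam2 = (Multiset.sort (Finset.univ.val.map hS.eigenvalues) (· ≤ ·)).getD 1 0)
    -- the sufficient condition
    (hcond : 0 ≤ lam2 /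
        ((1 + Real.sqrt (1 + lam2 / ∑ k : Idx n m, w k * (δ k.2 - β k.2 - s))) ^ 2
          * (n * m : ℝ) + 1) + s) :
    muMax (Bmat n m β * Fmat v - Dmat n m δ - Lmat Q v) ≤ 0 :=
  lambda2_sufficient_condition_general n m Q hQgen β δ hβ vα hvαpos Npop hNpop v hv K hK s hs hΔ w
    hwpos hwnull hwle S hSdef hS lam2 hlam2 hcond
end
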